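/- arXiv:2602.23098 — 7 statements merged into one kernel-verified Lean document; each statement's English description precedes it below -/
import Mathlib

section
/- Let C be a topological space, K ⊆ C a nonempty compact subset, A a nonempty type, and u⁰ : A → C → ℝ a bounded function such that u⁰(a,·) is continuous for every a ∈ A. Define u* := ⨆_{a ∈ A} min_{c ∈ K} u⁰(a,c) (each minimum is attained by compactness and continuity). Then there exist maps c₁ : A → C, c₂ : A → C and t : A → ℝ such that for every a ∈ A: c₁(a) ∈ K, c₂(a) ∈ K, t(a) ∈ [0,1], the mixture value Ū(a) := t(a)·u⁰(a, c₁(a)) + (1 − t(a))·u⁰(a, c₂(a)) satisfies Ū(a) ≤ u*, and moreover Ū(a) = u* whenever max_{c ∈ K} u⁰(a,c) ≥ u*. In particular, under the mechanism (c₁, c₂, t), every action a with max_{c ∈ K} u⁰(a,c) ≥ u* maximizes Ū over A. -/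
open Set

/-- Proposition 1 core — with public preferences, every undominated
action can be made indifferent (at value `u* = ⨆ a, min_{c ∈ K} u⁰ a c`) by a
mechanism assigning to each action a two-point mixture of consequences in `K`. -/
theorem stmt0 {C : Type*} [TopologicalSpace C] {A : Type*} [Nonempty A]
    (K : Set C) (hKne : K.Nonempty) (hKcomp : IsCompact K)
    (u0 : A → C → ℝ) (M : ℝ) (hbdd : ∀ a c, |u0 a c| ≤ M)
    (hcont : ∀ a, Continuous (u0 a)) :
    ∃ (c₁ c₂ : A → C) (t : A → ℝ),
      (∀ a, c₁ a ∈ K ∧ c₂ a ∈ K ∧ t a ∈ Set.Icc (0 : ℝ) 1 ∧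
        t a * u0 a (c₁ a) + (1 - t a) * u0 a (c₂ a)
          ≤ (⨆ a' : A, sInf (u0 a' '' K)) ∧
        (sSup (u0 a '' K) ≥ (⨆ a' : A, sInf (u0 a' '' K)) →
          t a * u0 a (c₁ a) + (1 - t a) * u0 a (c₂ a)
            = (⨆ a' : A, sInf (u0 a' '' K)))) ∧
      (∀ a, sSup (u0 a '' K) ≥ (⨆ a' : A, sInf (u0 a' '' K)) →
        ∀ a'' : A,
          t a'' * u0 a'' (c₁ a'') + (1 - t a'') * u0 a'' (c₂ a'')
            ≤ t a * u0 a (c₁ a) + (1 - t a) * u0 a (c₂ a)) := by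
  have hmin : ∀ a, ∃ c, c ∈ K ∧ ∀ c' ∈ K, u0 a c ≤ u0 a c' := by
    intro a
    obtain ⟨c, hcK, hc⟩ := hKcomp.exists_isMinOn hKne (hcont a).continuousOn
    exact ⟨c, hcK, fun c' hc' => hc hc'⟩
  have hmax : ∀ a, ∃ c, c ∈ K ∧ ∀ c' ∈ K, u0 a c' ≤ u0 a c := by
    intro a
    obtain ⟨c, hcK, hc⟩ := hKcomp.exists_isMaxOn hKne (hcont a).continuousOn
    exact ⟨c, hcK, fun c' hc' => hc hc'⟩
  choose cmin hcminK hcmin using hmin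
  choose cmax hcmaxK hcmax using hmax
  have hInf : ∀ a, sInf (u0 a '' K) = u0 a (cmin a) := by
    intro a
    refine IsLeast.csInf_eq ⟨⟨_, hcminK a, rfl⟩, ?_⟩
    rintro y ⟨c, hc, rfl⟩; exact hcmin a c hc
  have hSup : ∀ a, sSup (u0 a '' K) = u0 a (cmax a) := by
    intro a
    refine IsGreatest.csSup_eq ⟨⟨_, hcmaxK a, rfl⟩, ?_⟩
    rintro y ⟨c, hc, rfl⟩; exact hcmax a c hc
  set ustar := ⨆ a' : A, sInf (u0 a' '' K) with hustar
  have hbddA : BddAbove (Set.range fun a : A => sInf (u0 a '' K)) := by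
    refine ⟨M, ?_⟩
    rintro y ⟨a, rfl⟩
    show sInf (u0 a '' K) ≤ M
    rw [hInf a]
    exact (abs_le.mp (hbdd a (cmin a))).2
  have hle : ∀ a, u0 a (cmin a) ≤ ustar := by
    intro a
    rw [hustar, ← hInf a]
    exact le_ciSup hbddA a
  have hmm : ∀ a, u0 a (cmin a) ≤ u0 a (cmax a) := fun a => hcmax a _ (hcminK a)
  set t : A → ℝ := fun a =>
      if sSup (u0 a '' K) ≥ ustar ∧ u0 a (cmin a) < u0 a (cmax a)
      then (ustar - u0 a (cmin a)) / (u0 a (cmax a) - u0 a (cmin a)) else 0 with ht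
  have hval : ∀ a, t a * u0 a (cmax a) + (1 - t a) * u0 a (cmin a) ≤ ustar ∧
      (sSup (u0 a '' K) ≥ ustar →
        t a * u0 a (cmax a) + (1 - t a) * u0 a (cmin a) = ustar) := by
    intro a
    by_cases h : sSup (u0 a '' K) ≥ ustar ∧ u0 a (cmin a) < u0 a (cmax a)
    · have hposne : u0 a (cmax a) - u0 a (cmin a) ≠ 0 := by
        have := sub_pos.mpr h.2; linarith
      have heq : t a * u0 a (cmax a) + (1 - t a) * u0 a (cmin a) = ustar := by
        rw [ht]; simp only [if_pos h]
        field_simp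
        ring
      exact ⟨heq.le, fun _ => heq⟩
    · have ht0 : t a = 0 := by rw [ht]; simp only [if_neg h]
      constructor
      · rw [ht0]; simpa using hle a
      · intro hge
        have hne : ¬ u0 a (cmin a) < u0 a (cmax a) := fun hlt => h ⟨hge, hlt⟩
        have h1 : ustar ≤ u0 a (cmax a) := by rw [← hSup a]; exact hge
        have := hle a
        rw [ht0]
        have := not_lt.mp hne
        simp only [zero_mul, sub_zero, one_mul, zero_add]
        linarith
  have htmem : ∀ a, t a ∈ Set.Icc (0:ℝ) 1 := by
    intro a
    by_cases h : sSup (u0 a '' K) ≥ ustar ∧ u0 a (cmin a) < u0 a (cmax a)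
    · have hpos : 0 < u0 a (cmax a) - u0 a (cmin a) := sub_pos.mpr h.2
      rw [ht]; simp only [if_pos h]
      constructor
      · exact div_nonneg (sub_nonneg.mpr (hle a)) hpos.le
      · rw [div_le_one hpos]
        have : ustar ≤ u0 a (cmax a) := by rw [← hSup a]; exact h.1
        linarith
    · rw [ht]; simp only [if_neg h]; exact ⟨le_refl 0, zero_le_one⟩
  refine ⟨cmax, cmin, t, fun a => ⟨hcmaxK a, hcminK a, htmem a, (hval a).1, (hval a).2⟩,
    fun a hge a'' => ?_⟩
  rw [(hval a).2 hge]
  exact (hval a'').1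
end

section
/- Let A and C be finite nonempty sets, S any nonempty set of states, and (Ω, ℙ) a probability space. Let ĉ : A → PMF(C) be a mechanism, and let u : Ω → ℝ^{A×C} be a measurable random utility whose law (the pushforward of ℙ by u) is absolutely continuous with respect to Lebesgue measure on ℝ^{A×C}. Define the expected utility U(ω, a) := Σ_{c ∈ C} (ĉ(a))(c) · u(ω)(a,c). Suppose â : S × Ω → PMF(A) is an incentive compatible strategy, i.e. for every s ∈ S and ω ∈ Ω, every a in the support of â(s, ω) satisfies U(ω, a) ≥ U(ω, a') for all a' ∈ A. Then â is uninformative: for ℙ-almost every ω ∈ Ω, â(s, ω) = â(s', ω) for all s, s' ∈ S. -/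
open MeasureTheory

lemma pmf_eq_pure_of_support_subset {A : Type*} {p : PMF A} {a : A}
    (h : p.support ⊆ {a}) : p = PMF.pure a := by
  have ha : p a = 1 := by
    have := p.tsum_coe
    rwa [tsum_eq_single a (fun b hb => by
      by_contra hb0
      exact hb (h (by simpa [PMF.mem_support_iff] using hb0)))] at this
  ext b
  rcases eq_or_ne b a with rfl | hb
  · simp [ha]
  · have : p b = 0 := by
      by_contra hb0
      exact hb (h (by simpa [PMF.mem_support_iff] using hb0))
    simp [this, PMF.pure_apply, hb]

/-- Theorem 1, finite case — if the agent's random utility is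
prevalent (law absolutely continuous w.r.t. Lebesgue measure on `ℝ^{A×C}`),
then every incentive compatible strategy is uninformative: for almost every
type `ω` the mixed action `â s ω` does not depend on the state `s`. -/
theorem stmt2 {A C S : Type*} [Fintype A] [Nonempty A] [Fintype C] [Nonempty C]
    [Nonempty S] {Ω : Type*} [MeasureSpace Ω]
    [IsProbabilityMeasure (volume : Measure Ω)]
    (chat : A → PMF C)
    (u : Ω → (A × C → ℝ)) (hu : Measurable u)
    (habs : (volume : Measure Ω).map u ≪ (volume : Measure (A × C → ℝ)))
    (ahat : S → Ω → PMF A)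
    (hIC : ∀ s ω, ∀ a ∈ (ahat s ω).support, ∀ a' : A,
      ∑ c : C, ((chat a') c).toReal * u ω (a', c)
        ≤ ∑ c : C, ((chat a) c).toReal * u ω (a, c)) :
    ∀ᵐ ω ∂(volume : Measure Ω), ∀ s s' : S, ahat s ω = ahat s' ω := by
  classical
  -- the linear payoff functionals
  set L : A → ((A × C → ℝ) →ₗ[ℝ] ℝ) := fun a =>
    ∑ c : C, ((chat a) c).toReal • LinearMap.proj (R := ℝ) (φ := fun _ : A × C => ℝ) (a, c)
    with hL
  have hLval : ∀ a x, L a x = ∑ c : C, ((chat a) c).toReal * x (a, c) := by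
    intro a x
    simp [hL, LinearMap.sum_apply, LinearMap.smul_apply]
  -- bad set of utility vectors with a tie between two distinct actions
  set N : Set (A × C → ℝ) :=
    ⋃ p : A × A, ⋃ _ : p.1 ≠ p.2, {x | L p.1 x = L p.2 x} with hN
  have hNmeas : MeasurableSet N := by
    apply MeasurableSet.iUnion; intro p
    apply MeasurableSet.iUnion; intro _
    exact measurableSet_eq_fun (L p.1).continuous_of_finiteDimensional.measurable
      (L p.2).continuous_of_finiteDimensional.measurable
  have hNnull : (volume : Measure (A × C → ℝ)) N = 0 := by
    rw [hN]
    refine measure_iUnion_null fun p => measure_iUnion_null fun hp => ?_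
    have hset : {x | L p.1 x = L p.2 x} = (LinearMap.ker (L p.1 - L p.2) : Set (A × C → ℝ)) := by
      ext x
      simp [LinearMap.mem_ker, sub_eq_zero]
    rw [hset]
    refine Measure.addHaar_submodule _ _ ?_
    -- the functional is nonzero
    intro htop
    obtain ⟨c0, hc0⟩ := (chat p.1).support_nonempty
    have hx : (L p.1 - L p.2) (Pi.single (p.1, c0) 1) = ((chat p.1) c0).toReal := by
      have h1 : L p.1 (Pi.single (p.1, c0) 1) = ((chat p.1) c0).toReal := by
        rw [hLval]
        rw [Finset.sum_eq_single c0]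
        · simp [Pi.single_apply]
        · intro c _ hc
          simp [Pi.single_apply, Prod.ext_iff, hc]
        · simp
      have h2 : L p.2 (Pi.single (p.1, c0) 1) = 0 := by
        rw [hLval]
        refine Finset.sum_eq_zero fun c _ => ?_
        have : (p.2, c) ≠ (p.1, c0) := by simp [Prod.ext_iff]; intro h; exact absurd h.symm hp
        simp [Pi.single_apply, this]
      simp [h1, h2]
    have hmem : Pi.single (p.1, c0) 1 ∈ LinearMap.ker (L p.1 - L p.2) := htop.ge trivial
    rw [LinearMap.mem_ker, hx] at hmem
    have : (chat p.1) c0 ≠ 0 := hc0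
    simp [ENNReal.toReal_eq_zero_iff, this, PMF.apply_ne_top] at hmem
  -- pull back the null set
  have hpre : (volume : Measure Ω) (u ⁻¹' N) = 0 := by
    have := habs hNnull
    rwa [Measure.map_apply hu hNmeas] at this
  refine (measure_mono_null ?_ hpre)
  intro ω hω
  simp only [Set.mem_compl_iff, Set.mem_setOf_eq, not_forall] at hω
  obtain ⟨s, s', hss⟩ := hω
  -- it suffices to show ties occur
  by_contra hωN
  have hnt : ∀ a a' : A, a ≠ a' → L a (u ω) ≠ L a' (u ω) := by
    intro a a' hne heq
    exact hωN (Set.mem_iUnion.2 ⟨(a, a'), Set.mem_iUnion.2 ⟨hne, heq⟩⟩)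
  -- unique maximizer
  obtain ⟨astar, -, hastar⟩ := Finset.exists_max_image Finset.univ (fun a => L a (u ω))
    ⟨Classical.arbitrary A, Finset.mem_univ _⟩
  have key : ∀ t : S, ahat t ω = PMF.pure astar := by
    intro t
    refine pmf_eq_pure_of_support_subset ?_
    intro a ha
    have h1 := hIC t ω a ha astar
    rw [← hLval, ← hLval] at h1
    have h2 := hastar a (Finset.mem_univ _)
    have : L a (u ω) = L astar (u ω) := le_antisymm h2 h1
    by_contra hne
    exact hnt a astar (by simpa using hne) this
  exact hss (by rw [key s, key s'])
end

section
/- Let I be a nonempty index type, b : I → ℝ bounded above, and w : I → ℝⁿ bounded. Define g : ℝⁿ → ℝ by g(λ) := sup_{i ∈ I} (b(i) + ⟨λ, w(i)⟩), which is finite for every λ. Then for Lebesgue-almost every λ ∈ ℝⁿ the following holds: for all i, j ∈ I, if b(i) + ⟨λ, w(i)⟩ = g(λ) and b(j) + ⟨λ, w(j)⟩ = g(λ), then w(i) = w(j). -/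
/-!
The supremum `g` of a family of affine functions with bounded slopes is Lipschitz, so by
Rademacher's theorem it is differentiable almost everywhere. If an affine function `f` touches
`g` from below at a point where `g` is differentiable, then `g - f` has a local minimum there,
so the slope of `f` is the derivative of `g`; hence all touching functions share one slope.
-/

open MeasureTheory Filter Set Topology NNReal

theorem LipschitzWith.ciSup {α ι : Type*} [PseudoMetricSpace α] [Nonempty ι] {f : ι → α → ℝ}
    {K : ℝ≥0} (hf : ∀ i, LipschitzWith K (f i)) (hbdd : ∀ x, BddAbove (range fun i => f i x)) :
    LipschitzWith K fun x => ⨆ i, f i x :=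
  LipschitzWith.of_le_add_mul K fun x y => ciSup_le fun i =>
    ((hf i).le_add_mul x y).trans <| by gcongr; exact le_ciSup (hbdd y) i

theorem HasFDerivAt.eq_of_eventuallyLE_of_eq {E : Type*} [NormedAddCommGroup E] [NormedSpace ℝ E]
    {f g : E → ℝ} {f' g' : E →L[ℝ] ℝ} {x : E} (hf : HasFDerivAt f f' x) (hg : HasFDerivAt g g' x)
    (hle : f ≤ᶠ[𝓝 x] g) (heq : f x = g x) : f' = g' := by
  have hmin : IsLocalMin (fun y => g y - f y) x :=
    hle.mono fun y hy => by simp only [heq, sub_self]; linarith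
  exact (sub_eq_zero.mp (hmin.hasFDerivAt_eq_zero (hg.sub hf))).symm

section

variable {E ι : Type*} [NormedAddCommGroup E] [NormedSpace ℝ E] [FiniteDimensional ℝ E]
  [MeasurableSpace E] [BorelSpace E] (μ : Measure E) [μ.IsAddHaarMeasure]

theorem ae_fderiv_eq_of_eq_iSup {f : ι → E → ℝ} {f' : ι → E → E →L[ℝ] ℝ} {K : ℝ≥0}
    (hf : ∀ i x, HasFDerivAt (f i) (f' i x) x) (hlip : ∀ i, LipschitzWith K (f i))
    (hbdd : ∀ x, BddAbove (range fun i => f i x)) :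
    ∀ᵐ x ∂μ, ∀ i j, f i x = ⨆ k, f k x → f j x = ⨆ k, f k x → f' i x = f' j x := by
  rcases isEmpty_or_nonempty ι with hι | hι
  · exact .of_forall fun _ i => isEmptyElim i
  filter_upwards [(LipschitzWith.ciSup hlip hbdd).ae_differentiableAt (μ := μ)] with x hx i j hi hj
  have touch : ∀ i, f i x = ⨆ k, f k x → f' i x = fderiv ℝ (fun y => ⨆ k, f k y) x :=
    fun i hi => (hf i x).eq_of_eventuallyLE_of_eq hx.hasFDerivAt
      (.of_forall fun y => le_ciSup (hbdd y) i) hi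
  rw [touch i hi, touch j hj]

theorem ae_slope_eq_of_affine_eq_iSup (b : ι → ℝ) (hb : BddAbove (range b)) (ℓ : ι → E →L[ℝ] ℝ)
    (C : ℝ) (hℓ : ∀ i, ‖ℓ i‖ ≤ C) :
    ∀ᵐ x ∂μ, ∀ i j, b i + ℓ i x = ⨆ k, (b k + ℓ k x) → b j + ℓ j x = ⨆ k, (b k + ℓ k x) →
      ℓ i = ℓ j := by
  have hle : ∀ i x, ℓ i x ≤ C * ‖x‖ := fun i x =>
    (le_abs_self _).trans <| ((ℓ i).le_opNorm x).trans <| by gcongr; exact hℓ i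
  obtain ⟨B, hB⟩ := hb
  refine ae_fderiv_eq_of_eq_iSup μ (K := C.toNNReal) (fun i x => (ℓ i).hasFDerivAt.const_add (b i))
    (fun i => LipschitzWith.of_le_add_mul' C fun x y => ?_) fun x => ⟨B + C * ‖x‖, ?_⟩
  · have := hle i (x - y)
    rw [map_sub, ← dist_eq_norm] at this
    linarith
  · rintro _ ⟨i, rfl⟩
    exact add_le_add (hB ⟨i, rfl⟩) (hle i x)

end

section

variable {ι : Type*} [Fintype ι]

noncomputable def dotProductCLM (v : ι → ℝ) : (ι → ℝ) →L[ℝ] ℝ :=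
  ∑ k, (ContinuousLinearMap.proj k).smulRight (v k)

theorem dotProductCLM_apply (v x : ι → ℝ) : dotProductCLM v x = ∑ k, x k * v k := by
  simp [dotProductCLM]

theorem dotProductCLM_injective : Function.Injective (dotProductCLM (ι := ι)) := by
  classical
  intro v v' h
  funext k
  simpa [dotProductCLM_apply, Pi.single_apply] using congr($h (Pi.single k 1))

theorem norm_dotProductCLM_le {v : ι → ℝ} {R : ℝ} (hv : ∀ k, |v k| ≤ R) :
    ‖dotProductCLM v‖ ≤ R * ∑ k, ‖ContinuousLinearMap.proj (R := ℝ) (φ := fun _ : ι => ℝ) k‖ := by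
  rw [Finset.mul_sum]
  refine (norm_sum_le _ _).trans (Finset.sum_le_sum fun k _ => ?_)
  rw [ContinuousLinearMap.norm_smulRight_apply, mul_comm, Real.norm_eq_abs]
  gcongr
  exact hv k

end

theorem stmt5_general {I : Type*} {n : ℕ}
    (b : I → ℝ) (hb : BddAbove (Set.range b))
    (w : I → (Fin n → ℝ)) (R : ℝ) (hw : ∀ i k, |w i k| ≤ R) :
    ∀ᵐ lam : (Fin n → ℝ) ∂volume, ∀ i j : I,
      b i + ∑ k, lam k * w i k = (⨆ i' : I, (b i' + ∑ k, lam k * w i' k)) →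
      b j + ∑ k, lam k * w j k = (⨆ i' : I, (b i' + ∑ k, lam k * w i' k)) →
      w i = w j := by
  filter_upwards [ae_slope_eq_of_affine_eq_iSup volume b hb (fun i => dotProductCLM (w i)) _
    fun i => norm_dotProductCLM_le (hw i)] with lam hlam i j hi hj
  simp only [dotProductCLM_apply] at hlam
  exact dotProductCLM_injective (hlam i j hi hj)

/-- the pointwise supremum `g(λ) = ⨆ i, (b i + ⟨λ, w i⟩)` of a
family of affine functions with bounded data is such that, for Lebesgue-almost
every `λ`, all indices attaining the supremum share the same slope `w i`. -/
theorem stmt5 {I : Type*} [Nonempty I] {n : ℕ}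
    (b : I → ℝ) (hb : BddAbove (Set.range b))
    (w : I → (Fin n → ℝ)) (R : ℝ) (hw : ∀ i k, |w i k| ≤ R) :
    ∀ᵐ lam : (Fin n → ℝ) ∂volume, ∀ i j : I,
      b i + ∑ k, lam k * w i k = (⨆ i' : I, (b i' + ∑ k, lam k * w i' k)) →
      b j + ∑ k, lam k * w j k = (⨆ i' : I, (b i' + ∑ k, lam k * w i' k)) →
      w i = w j :=
  stmt5_general b hb w R hw
end

section
/- Let A and C be finite nonempty sets, S any nonempty set of states, and let Ω = Ω₀ × Ω₁ carry a product probability measure ℙ = ℙ₀ ⊗ ℙ₁. Let ĉ : A → PMF(C) be a mechanism, v₀ : Ω₀ → ℝ^{A×C} measurable with arbitrary law, and v₁ : Ω₁ → ℝ^A measurable with law absolutely continuous with respect to Lebesgue measure on ℝ^A. Define U(ω₀, ω₁, a) := v₁(ω₁)(a) + Σ_{c ∈ C} (ĉ(a))(c) · v₀(ω₀)(a,c). Then for ℙ-almost every (ω₀, ω₁), the set argmax_{a ∈ A} U(ω₀, ω₁, a) is a singleton; consequently, every strategy â : S × Ω → PMF(A) such that for all s and ω every a in the support of â(s, ω) maximizes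 U(ω, ·) over A satisfies: for ℙ-almost every ω, â(s, ω) = â(s', ω) for all s, s' ∈ S. -/
open MeasureTheory

private lemma stmt6_hyperplane {A : Type*} [Fintype A] (a a' : A) (h : a ≠ a') (t : ℝ) :
    (volume : Measure (A → ℝ)) {x | x a - x a' = t} = 0 := by
  classical
  set L : (A → ℝ) →ₗ[ℝ] ℝ :=
    (LinearMap.proj a : (A → ℝ) →ₗ[ℝ] ℝ) - (LinearMap.proj a' : (A → ℝ) →ₗ[ℝ] ℝ) with hL
  have hker : LinearMap.ker L ≠ ⊤ := by
    intro htop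
    have : L (Pi.single a 1) = 0 := by
      rw [← LinearMap.mem_ker, htop]; trivial
    simp [hL, Pi.single_apply, h, h.symm] at this
  have hx₀ : L ((Pi.single a t : A → ℝ)) = t := by
    simp [hL, Pi.single_apply, h, h.symm]
  have hset : {x : A → ℝ | x a - x a' = t}
      = (fun x => x + (-(Pi.single a t : A → ℝ))) ⁻¹' (LinearMap.ker L) := by
    ext x
    simp only [Set.mem_setOf_eq, Set.mem_preimage, SetLike.mem_coe, LinearMap.mem_ker,
      map_add, map_neg, hx₀]
    constructor
    · intro hx; simp [hL, hx]
    · intro hx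
      have : L x = t := by linarith [hx, congrArg id hx]
      simpa [hL] using this
  rw [hset, measure_preimage_add_right]
  exact Measure.addHaar_submodule _ _ hker

/-- Proposition 2(a) — utility `v₀ + v₁` with independent
components, where the private part `v₁` depends only on the action and is
prevalent. Then for almost every type the argmax is a singleton, and every
incentive compatible strategy is uninformative. -/
theorem stmt6 {A C S : Type*} [Fintype A] [Nonempty A] [Fintype C] [Nonempty C]
    [Nonempty S] {Ω₀ Ω₁ : Type*} [MeasurableSpace Ω₀] [MeasurableSpace Ω₁]
    (P₀ : Measure Ω₀) (P₁ : Measure Ω₁)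
    [IsProbabilityMeasure P₀] [IsProbabilityMeasure P₁]
    (chat : A → PMF C)
    (v₀ : Ω₀ → (A × C → ℝ)) (hv₀ : Measurable v₀)
    (v₁ : Ω₁ → (A → ℝ)) (hv₁ : Measurable v₁)
    (habs : P₁.map v₁ ≪ (volume : Measure (A → ℝ)))
    (U : (Ω₀ × Ω₁) → A → ℝ)
    (hU : ∀ ω a, U ω a
      = v₁ ω.2 a + ∑ c : C, ((chat a) c).toReal * v₀ ω.1 (a, c)) :
    (∀ᵐ ω ∂(P₀.prod P₁), ∃ a₀ : A, {a : A | ∀ a' : A, U ω a' ≤ U ω a} = {a₀}) ∧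
    ∀ ahat : S → (Ω₀ × Ω₁) → PMF A,
      (∀ s ω, ∀ a ∈ (ahat s ω).support, ∀ a' : A, U ω a' ≤ U ω a) →
      ∀ᵐ ω ∂(P₀.prod P₁), ∀ s s' : S, ahat s ω = ahat s' ω := by
  classical
  -- the expected payment part
  set g : Ω₀ → A → ℝ := fun ω₀ a => ∑ c : C, ((chat a) c).toReal * v₀ ω₀ (a, c) with hg
  have hgmeas : ∀ a, Measurable (fun ω₀ => g ω₀ a) := by
    intro a
    apply Finset.measurable_sum
    intro c _
    exact (measurable_const.mul ((measurable_pi_apply (a, c)).comp hv₀))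
  -- for each pair of distinct actions, ties happen with probability zero
  have hpair : ∀ a a' : A, a ≠ a' →
      (P₀.prod P₁) {ω : Ω₀ × Ω₁ | U ω a = U ω a'} = 0 := by
    intro a a' hne
    have hBeq : {ω : Ω₀ × Ω₁ | U ω a = U ω a'}
        = {ω : Ω₀ × Ω₁ | v₁ ω.2 a - v₁ ω.2 a' = g ω.1 a' - g ω.1 a} := by
      ext ω
      simp only [Set.mem_setOf_eq, hU]
      constructor <;> intro h <;> linarith
    have hBmeas : MeasurableSet {ω : Ω₀ × Ω₁ | v₁ ω.2 a - v₁ ω.2 a' = g ω.1 a' - g ω.1 a} := by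
      have h1 : Measurable fun ω : Ω₀ × Ω₁ =>
          (v₁ ω.2 a - v₁ ω.2 a') - (g ω.1 a' - g ω.1 a) :=
        (((measurable_pi_apply a).comp (hv₁.comp measurable_snd)).sub
          ((measurable_pi_apply a').comp (hv₁.comp measurable_snd))).sub
          (((hgmeas a').comp measurable_fst).sub ((hgmeas a).comp measurable_fst))
      have : {ω : Ω₀ × Ω₁ | v₁ ω.2 a - v₁ ω.2 a' = g ω.1 a' - g ω.1 a}
          = (fun ω : Ω₀ × Ω₁ => (v₁ ω.2 a - v₁ ω.2 a') - (g ω.1 a' - g ω.1 a)) ⁻¹' {0} := by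
        ext ω; simp [sub_eq_zero]
      rw [this]
      exact h1 (measurableSet_singleton 0)
    rw [hBeq, Measure.measure_prod_null hBmeas]
    filter_upwards with ω₀
    show _ = (0 : ENNReal)
    have hslice : (Prod.mk ω₀ ⁻¹' {ω : Ω₀ × Ω₁ | v₁ ω.2 a - v₁ ω.2 a' = g ω.1 a' - g ω.1 a})
        = v₁ ⁻¹' {x : A → ℝ | x a - x a' = g ω₀ a' - g ω₀ a} := by
      ext ω₁; simp
    rw [hslice, ← Measure.map_apply hv₁]
    · exact habs (stmt6_hyperplane a a' hne _)
    · have h1 : Measurable fun x : A → ℝ => x a - x a' :=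
        (measurable_pi_apply a).sub (measurable_pi_apply a')
      exact h1 (measurableSet_singleton _)
  -- almost everywhere, all actions have distinct utilities
  have hdist : ∀ᵐ ω ∂(P₀.prod P₁), ∀ a a' : A, a ≠ a' → U ω a ≠ U ω a' := by
    rw [ae_all_iff]
    intro a
    rw [ae_all_iff]
    intro a'
    by_cases hne : a = a'
    · filter_upwards with ω h; exact absurd hne h
    · have := hpair a a' hne
      rw [ae_iff]
      convert this using 2
      ext ω
      simp [hne]
  -- first conjunct
  have hmain : ∀ᵐ ω ∂(P₀.prod P₁),
      ∃ a₀ : A, {a : A | ∀ a' : A, U ω a' ≤ U ω a} = {a₀} := by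
    filter_upwards [hdist] with ω hω
    obtain ⟨a₀, -, ha₀⟩ := Finset.exists_max_image (Finset.univ : Finset A) (U ω)
      Finset.univ_nonempty
    refine ⟨a₀, ?_⟩
    ext a
    simp only [Set.mem_setOf_eq, Set.mem_singleton_iff]
    constructor
    · intro ha
      by_contra hne
      exact hω a a₀ hne (le_antisymm (ha₀ a (Finset.mem_univ a)) (ha a₀))
    · rintro rfl
      intro a'
      exact ha₀ a' (Finset.mem_univ a')
  refine ⟨hmain, ?_⟩
  intro ahat hic
  filter_upwards [hmain] with ω hω s s'
  obtain ⟨a₀, ha₀⟩ := hω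
  have hsupp : ∀ t : S, (ahat t ω).support = {a₀} := by
    intro t
    have hsub : (ahat t ω).support ⊆ {a₀} := by
      intro a ha
      have : a ∈ {a : A | ∀ a' : A, U ω a' ≤ U ω a} := hic t ω a ha
      rwa [ha₀] at this
    obtain ⟨b, hb⟩ := (ahat t ω).support_nonempty
    have hb' : b = a₀ := hsub hb
    apply Set.eq_singleton_iff_unique_mem.mpr
    exact ⟨hb' ▸ hb, fun x hx => hsub hx⟩
  have h1 : ahat s ω a₀ = 1 := ((ahat s ω).apply_eq_one_iff a₀).mpr (hsupp s)
  have h2 : ahat s' ω a₀ = 1 := ((ahat s' ω).apply_eq_one_iff a₀).mpr (hsupp s')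
  ext b
  by_cases hb : b = a₀
  · rw [hb, h1, h2]
  · have hb1 : ahat s ω b = 0 := by
      by_contra h
      exact hb (by have := (hsupp s) ▸ (PMF.mem_support_iff _ b).mpr h; simpa using this)
    have hb2 : ahat s' ω b = 0 := by
      by_contra h
      exact hb (by have := (hsupp s') ▸ (PMF.mem_support_iff _ b).mpr h; simpa using this)
    rw [hb1, hb2]
end

section
/- Let A and C be finite nonempty sets, S any nonempty set of states, and let Ω = Ω₀ × Ω₁ carry a product probability measure ℙ = ℙ₀ ⊗ ℙ₁. Let ĉ : A → PMF(C) be a mechanism, v₀ : Ω₀ → ℝ^{A×C} measurable with arbitrary law, and v₁ : Ω₁ → ℝ^C measurable with law absolutely continuous with respect to Lebesgue measure on ℝ^C. Define U(ω₀, ω₁, a) := Σ_{c ∈ C} (ĉ(a))(c) · (v₀(ω₀)(a,c) + v₁(ω₁)(c)). Then for ℙ-almost every (ω₀, ω₁): any two actions a, a' ∈ A that both maximize U(ω₀, ω₁, ·) over A satisfy ĉ(a) = ĉ(a') as elements of PMF(C). Consequently, for every strategy â : S × Ω → PMF(A) such that every a in the support of â(s,ω) maximizes U(ω,·), for ℙ-almost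 every ω the induced consequence distribution is state-independent: for all s, s' ∈ S and all a in the support of â(s,ω) and a' in the support of â(s',ω), ĉ(a) = ĉ(a'). -/
open MeasureTheory

noncomputable def myL {C : Type*} [Fintype C] (w : C → ℝ) : (C → ℝ) →ₗ[ℝ] ℝ where
  toFun x := ∑ c, w c * x c
  map_add' x y := by simp [mul_add, Finset.sum_add_distrib]
  map_smul' r x := by
    simp only [Pi.smul_apply, smul_eq_mul, RingHom.id_apply, Finset.mul_sum]
    exact Finset.sum_congr rfl fun c _ => by ring

lemma hyperplane_null {C : Type*} [Fintype C] [DecidableEq C] {w : C → ℝ} (hw : w ≠ 0) (t : ℝ) :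
    (volume : Measure (C → ℝ)) {x | ∑ c, w c * x c = t} = 0 := by
  obtain ⟨c₀, hc₀⟩ : ∃ c, w c ≠ 0 := by
    by_contra h; push_neg at h; exact hw (funext h)
  set L := myL w
  have hL : ∀ x, L x = ∑ c, w c * x c := fun x => rfl
  have hker : LinearMap.ker L ≠ ⊤ := by
    intro h
    have : L (Pi.single c₀ 1) = 0 := by
      have : Pi.single c₀ 1 ∈ LinearMap.ker L := h ▸ Submodule.mem_top
      simpa using this
    rw [hL] at this
    rw [Finset.sum_eq_single c₀ (fun b _ hb => by simp [Pi.single_apply, hb]) (by simp)] at this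
    simp [Pi.single_apply] at this
    exact hc₀ this
  set x₀ : C → ℝ := Pi.single c₀ (t / w c₀) with hx₀
  have hLx₀ : L x₀ = t := by
    rw [hL]
    rw [Finset.sum_eq_single c₀ (fun b _ hb => by simp [hx₀, Pi.single_apply, hb]) (by simp)]
    simp [hx₀, Pi.single_apply]
    field_simp
  have hset : {x : C → ℝ | ∑ c, w c * x c = t} = (· + (-x₀)) ⁻¹' (LinearMap.ker L : Set (C → ℝ)) := by
    ext x
    simp only [Set.mem_preimage, SetLike.mem_coe, LinearMap.mem_ker, map_add, map_neg, hLx₀,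
      Set.mem_setOf_eq, ← hL x]
    constructor
    · intro h; rw [h]; ring
    · intro h; linarith
  rw [hset, measure_preimage_add_right]
  exact Measure.addHaar_submodule _ _ hker


/-- Proposition 2(b)(i) — utility `v₀ + v₁` with independent
components, where the private part `v₁` depends only on the consequence and is
prevalent. Then for almost every type, any two optimal actions induce the same
consequence distribution, so under any incentive compatible strategy the
induced consequence distribution is state-independent. -/
theorem stmt7 {A C S : Type*} [Fintype A] [Nonempty A] [Fintype C] [Nonempty C]
    [Nonempty S] {Ω₀ Ω₁ : Type*} [MeasurableSpace Ω₀] [MeasurableSpace Ω₁]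
    (P₀ : Measure Ω₀) (P₁ : Measure Ω₁)
    [IsProbabilityMeasure P₀] [IsProbabilityMeasure P₁]
    (chat : A → PMF C)
    (v₀ : Ω₀ → (A × C → ℝ)) (hv₀ : Measurable v₀)
    (v₁ : Ω₁ → (C → ℝ)) (hv₁ : Measurable v₁)
    (habs : P₁.map v₁ ≪ (volume : Measure (C → ℝ)))
    (U : (Ω₀ × Ω₁) → A → ℝ)
    (hU : ∀ ω a, U ω a
      = ∑ c : C, ((chat a) c).toReal * (v₀ ω.1 (a, c) + v₁ ω.2 c)) :
    (∀ᵐ ω ∂(P₀.prod P₁), ∀ a a' : A,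
      (∀ a'' : A, U ω a'' ≤ U ω a) → (∀ a'' : A, U ω a'' ≤ U ω a') →
      chat a = chat a') ∧
    ∀ ahat : S → (Ω₀ × Ω₁) → PMF A,
      (∀ s ω, ∀ a ∈ (ahat s ω).support, ∀ a' : A, U ω a' ≤ U ω a) →
      ∀ᵐ ω ∂(P₀.prod P₁), ∀ s s' : S,
        ∀ a ∈ (ahat s ω).support, ∀ a' ∈ (ahat s' ω).support,
          chat a = chat a' := by
  classical
  have key : ∀ a a' : A, chat a ≠ chat a' →
      (P₀.prod P₁) {ω | U ω a = U ω a'} = 0 := by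
    intro a a' hne
    set w : C → ℝ := fun c => ((chat a) c).toReal - ((chat a') c).toReal with hwdef
    have hw : w ≠ 0 := by
      obtain ⟨c, hc⟩ : ∃ c, (chat a) c ≠ (chat a') c := by
        by_contra h; push_neg at h; exact hne (PMF.ext h)
      intro h
      apply hc
      have h2 := congrFun h c
      simp only [hwdef, Pi.zero_apply, sub_eq_zero] at h2
      exact (ENNReal.toReal_eq_toReal_iff' (PMF.apply_ne_top _ _) (PMF.apply_ne_top _ _)).mp h2
    set T : Ω₀ → ℝ := fun ω₀ =>
      (∑ c, ((chat a') c).toReal * v₀ ω₀ (a', c))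
        - ∑ c, ((chat a) c).toReal * v₀ ω₀ (a, c) with hT
    have hset : ∀ ω : Ω₀ × Ω₁, U ω a = U ω a' ↔ ∑ c, w c * v₁ ω.2 c = T ω.1 := by
      intro ω
      simp only [hU, hwdef, hT, mul_add, Finset.sum_add_distrib, sub_mul,
        Finset.sum_sub_distrib]
      constructor <;> intro h <;> linarith
    have hfmeas : Measurable fun ω : Ω₀ × Ω₁ => ∑ c, w c * v₁ ω.2 c :=
      Finset.measurable_sum _ fun c _ =>
        measurable_const.mul ((measurable_pi_apply c).comp (hv₁.comp measurable_snd))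
    have hTmeas : Measurable fun ω : Ω₀ × Ω₁ => T ω.1 := by
      apply Measurable.sub <;>
        exact Finset.measurable_sum _ fun c _ =>
          measurable_const.mul ((measurable_pi_apply _).comp (hv₀.comp measurable_fst))
    have hBad : {ω : Ω₀ × Ω₁ | U ω a = U ω a'}
        = {ω : Ω₀ × Ω₁ | ∑ c, w c * v₁ ω.2 c = T ω.1} := by
      ext ω; exact hset ω
    rw [hBad]
    have hmeas : MeasurableSet {ω : Ω₀ × Ω₁ | ∑ c, w c * v₁ ω.2 c = T ω.1} :=
      measurableSet_eq_fun hfmeas hTmeas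
    rw [Measure.measure_prod_null hmeas]
    refine Filter.Eventually.of_forall fun ω₀ => ?_
    have hpre : (Prod.mk ω₀ ⁻¹' {ω : Ω₀ × Ω₁ | ∑ c, w c * v₁ ω.2 c = T ω.1})
        = v₁ ⁻¹' {x : C → ℝ | ∑ c, w c * x c = T ω₀} := by
      ext ω₁; simp
    have hSmeas : MeasurableSet {x : C → ℝ | ∑ c, w c * x c = T ω₀} :=
      measurableSet_eq_fun
        (Finset.measurable_sum _ fun c _ => measurable_const.mul (measurable_pi_apply c))
        measurable_const
    show P₁ _ = 0
    rw [hpre, ← Measure.map_apply hv₁ hSmeas]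
    exact habs (hyperplane_null hw (T ω₀))
  have key2 : ∀ᵐ ω ∂(P₀.prod P₁), ∀ a a' : A, chat a ≠ chat a' → U ω a ≠ U ω a' := by
    rw [ae_all_iff]; intro a; rw [ae_all_iff]; intro a'
    by_cases h : chat a = chat a'
    · exact Filter.Eventually.of_forall fun ω hne => absurd h hne
    · have h0 : ∀ᵐ ω ∂(P₀.prod P₁), U ω a ≠ U ω a' := by
        rw [ae_iff]; simpa [not_not] using key a a' h
      exact h0.mono fun ω hω _ => hω
  have main : ∀ᵐ ω ∂(P₀.prod P₁), ∀ a a' : A,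
      (∀ a'' : A, U ω a'' ≤ U ω a) → (∀ a'' : A, U ω a'' ≤ U ω a') →
      chat a = chat a' := by
    refine key2.mono fun ω hω a a' h1 h2 => ?_
    by_contra hne
    exact hω a a' hne (le_antisymm (h2 a) (h1 a'))
  exact ⟨main, fun ahat hIC => main.mono fun ω hω s s' a ha a' ha' =>
    hω a a' (hIC s ω a ha) (hIC s' ω a' ha')⟩
end

section
/- Let X be a compact metric space, Γ a nonempty set of Borel probability measures on X, ũ : X → ℝ continuous, and v : X → ℝⁿ continuous. For λ ∈ ℝⁿ define F_λ(γ) := ∫_X (ũ(x) + ⟨λ, v(x)⟩) dγ(x). Then for Lebesgue-almost every λ ∈ ℝⁿ: any two measures γ, γ' ∈ Γ that both attain sup_{γ'' ∈ Γ} F_λ(γ'') satisfy ∫_X v dγ = ∫_X v dγ'. Moreover, if in addition v is injective and γ = δ_x and γ' = δ_{x'} are Dirac maximizers, then x = x'. -/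
/-!
Writing `c γ = ∫ ũ dγ` and `m γ = ∫ v dγ`, each `λ ↦ F λ γ = c γ + ⟨λ, m γ⟩` is affine with
slope bounded uniformly in `γ` (since `X` is compact), so the value function
`V λ = sup_{γ ∈ Γ} F λ γ` is Lipschitz and, by Rademacher's theorem, differentiable almost
everywhere. At a point of differentiability every maximizer `γ` touches `V` from below, so its
slope `m γ` must be the gradient of `V` (envelope theorem); hence all maximizers share it.
-/

open MeasureTheory Filter Topology
open scoped NNReal

section Envelope

variable {E : Type*} [NormedAddCommGroup E] [NormedSpace ℝ E]

theorem HasFDerivAt.eq_fderiv_of_eventuallyLE_of_eq {f g : E → ℝ} {f' : E →L[ℝ] ℝ} {x : E}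
    (hf : HasFDerivAt f f' x) (hg : DifferentiableAt ℝ g x) (hle : f ≤ᶠ[𝓝 x] g)
    (heq : f x = g x) : f' = fderiv ℝ g x := by
  have hmin : IsLocalMin (g - f) x := by
    filter_upwards [hle] with y hy
    simp only [Pi.sub_apply, heq, sub_self, sub_nonneg, hy]
  exact (sub_eq_zero.mp (hmin.hasFDerivAt_eq_zero (hg.hasFDerivAt.sub hf))).symm

theorem lipschitzWith_sSup_image {α ι : Type*} [PseudoMetricSpace α] {f : ι → α → ℝ}
    {S : Set ι} {K : ℝ≥0} (hS : S.Nonempty) (hf : ∀ i ∈ S, LipschitzWith K (f i))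
    (hbdd : ∀ x, BddAbove ((f · x) '' S)) :
    LipschitzWith K fun x ↦ sSup ((f · x) '' S) := by
  refine LipschitzWith.of_le_add_mul K fun x y ↦ csSup_le (hS.image _) ?_
  rintro _ ⟨i, hi, rfl⟩
  calc f i x ≤ f i y + K * dist x y := (hf i hi).le_add_mul x y
    _ ≤ sSup ((f · y) '' S) + K * dist x y := by
      gcongr
      exact le_csSup (hbdd y) ⟨i, hi, rfl⟩

theorem ae_fderiv_eq_of_sSup_eq [MeasurableSpace E] [BorelSpace E] [FiniteDimensional ℝ E]
    (μ : Measure E) [μ.IsAddHaarMeasure] {ι : Type*} {f : ι → E → ℝ} {S : Set ι} {K : ℝ≥0}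
    (hS : S.Nonempty) (hf : ∀ i ∈ S, LipschitzWith K (f i))
    (hdiff : ∀ i ∈ S, Differentiable ℝ (f i)) (hbdd : ∀ x, BddAbove ((f · x) '' S)) :
    ∀ᵐ x ∂μ, ∀ i ∈ S, ∀ j ∈ S, f i x = sSup ((f · x) '' S) → f j x = sSup ((f · x) '' S) →
      fderiv ℝ (f i) x = fderiv ℝ (f j) x := by
  filter_upwards [(lipschitzWith_sSup_image hS hf hbdd).ae_differentiableAt (μ := μ)]
    with x hx i hi j hj hix hjx
  have hle : ∀ k ∈ S, f k ≤ᶠ[𝓝 x] fun y ↦ sSup ((f · y) '' S) :=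
    fun k hk ↦ Eventually.of_forall fun y ↦ le_csSup (hbdd y) ⟨k, hk, rfl⟩
  rw [((hdiff i hi x).hasFDerivAt.eq_fderiv_of_eventuallyLE_of_eq hx (hle i hi) hix),
    ((hdiff j hj x).hasFDerivAt.eq_fderiv_of_eventuallyLE_of_eq hx (hle j hj) hjx)]

theorem ae_slope_eq_of_sSup_eq [MeasurableSpace E] [BorelSpace E] [FiniteDimensional ℝ E]
    (μ : Measure E) [μ.IsAddHaarMeasure] {ι : Type*} {S : Set ι} (hS : S.Nonempty)
    (c : ι → ℝ) (φ : ι → E →L[ℝ] ℝ) {C D : ℝ} (hc : ∀ i ∈ S, c i ≤ D)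
    (hφ : ∀ i ∈ S, ‖φ i‖ ≤ C) :
    ∀ᵐ x ∂μ, ∀ i ∈ S, ∀ j ∈ S,
      c i + φ i x = sSup ((fun k ↦ c k + φ k x) '' S) →
      c j + φ j x = sSup ((fun k ↦ c k + φ k x) '' S) → φ i = φ j := by
  have hlip : ∀ i ∈ S, LipschitzWith C.toNNReal fun x ↦ c i + φ i x := by
    intro i hi
    simpa using (LipschitzWith.const (α := E) (c i)).add
      ((φ i).lipschitz.weaken ((hφ i hi).trans (Real.le_coe_toNNReal C)))
  have hbdd : ∀ x, BddAbove ((fun k ↦ c k + φ k x) '' S) := by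
    intro x
    refine ⟨D + C * ‖x‖, ?_⟩
    rintro _ ⟨i, hi, rfl⟩
    calc c i + φ i x ≤ D + ‖φ i‖ * ‖x‖ :=
          add_le_add (hc i hi) ((le_abs_self _).trans ((φ i).le_opNorm x))
      _ ≤ D + C * ‖x‖ := by gcongr; exact hφ i hi
  filter_upwards [ae_fderiv_eq_of_sSup_eq μ hS hlip
    (fun i _ ↦ ((φ i).differentiable.const_add (c i))) hbdd] with x hx i hi j hj hix hjx
  simpa [fderiv_const_add] using hx i hi j hj hix hjx

end Envelope

section DotProduct

variable {ι : Type*} [Fintype ι]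

noncomputable def dotProductCLE [DecidableEq ι] : (ι → ℝ) ≃L[ℝ] ((ι → ℝ) →L[ℝ] ℝ) :=
  ((dotProductEquiv ℝ ι).trans LinearMap.toContinuousLinearMap).toContinuousLinearEquiv

@[simp]
theorem dotProductCLE_apply [DecidableEq ι] (w x : ι → ℝ) : dotProductCLE w x = w ⬝ᵥ x :=
  rfl

theorem integral_dotProduct {X : Type*} [MeasurableSpace X] {μ : Measure X} {v : X → ι → ℝ}
    (hv : Integrable v μ) (w : ι → ℝ) : ∫ x, w ⬝ᵥ v x ∂μ = w ⬝ᵥ ∫ x, v x ∂μ := by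
  classical
  exact (dotProductCLE w).integral_comp_comm hv

end DotProduct

theorem Continuous.exists_forall_norm_integral_le {X E : Type*} [TopologicalSpace X]
    [CompactSpace X] [MeasurableSpace X] [NormedAddCommGroup E] [NormedSpace ℝ E] {f : X → E}
    (hf : Continuous f) : ∃ C, ∀ μ : ProbabilityMeasure X, ‖∫ x, f x ∂(μ : Measure X)‖ ≤ C := by
  obtain ⟨C, hC⟩ := isCompact_univ.exists_bound_of_continuousOn hf.continuousOn
  refine ⟨C, fun μ ↦ ?_⟩
  simpa using norm_integral_le_of_norm_le_const (μ := (μ : Measure X))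
    (ae_of_all _ fun x ↦ hC x trivial)

/-- measure-theoretic finite-dimensional form of Theorem 1 — over
a set `Γ` of Borel probability measures on a compact metric space, for
Lebesgue-almost every coefficient vector `λ` all maximizers of
`γ ↦ ∫ (ũ + ⟨λ, v⟩) dγ` share the same `v`-moment vector, and when `v` is
injective any two Dirac maximizers coincide. -/
theorem stmt9 {X : Type*} [MetricSpace X] [CompactSpace X]
    [MeasurableSpace X] [BorelSpace X] {n : ℕ}
    (Γ : Set (ProbabilityMeasure X)) (hΓ : Γ.Nonempty)
    (utilde : X → ℝ) (hutilde : Continuous utilde)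
    (v : X → (Fin n → ℝ)) (hv : Continuous v)
    (F : (Fin n → ℝ) → ProbabilityMeasure X → ℝ)
    (hF : ∀ lam γ, F lam γ
      = ∫ x, (utilde x + ∑ k, lam k * v x k) ∂(γ : Measure X)) :
    ∀ᵐ lam : (Fin n → ℝ) ∂volume,
      (∀ γ ∈ Γ, ∀ γ' ∈ Γ,
        F lam γ = sSup (F lam '' Γ) → F lam γ' = sSup (F lam '' Γ) →
        (∫ x, v x ∂(γ : Measure X)) = ∫ x, v x ∂(γ' : Measure X)) ∧
      (Function.Injective v → ∀ γ ∈ Γ, ∀ γ' ∈ Γ, ∀ x x' : X,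
        (γ : Measure X) = Measure.dirac x → (γ' : Measure X) = Measure.dirac x' →
        F lam γ = sSup (F lam '' Γ) → F lam γ' = sSup (F lam '' Γ) →
        x = x') := by
  set c : ProbabilityMeasure X → ℝ := fun γ ↦ ∫ x, utilde x ∂(γ : Measure X)
  set m : ProbabilityMeasure X → Fin n → ℝ := fun γ ↦ ∫ x, v x ∂(γ : Measure X)
  have hF_affine : F = fun lam γ ↦ c γ + dotProductCLE (m γ) lam := by
    ext lam γ
    have hv_int : Integrable v (γ : Measure X) :=
      hv.integrable_of_hasCompactSupport (.of_compactSpace v)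
    calc F lam γ = ∫ x, utilde x + lam ⬝ᵥ v x ∂(γ : Measure X) := hF lam γ
      _ = c γ + ∫ x, lam ⬝ᵥ v x ∂(γ : Measure X) := integral_add
          (hutilde.integrable_of_hasCompactSupport (.of_compactSpace _))
          ((dotProductCLE lam).integrable_comp hv_int)
      _ = c γ + dotProductCLE (m γ) lam := by
          rw [integral_dotProduct hv_int, dotProductCLE_apply, dotProduct_comm]
  obtain ⟨Cu, hCu⟩ := hutilde.exists_forall_norm_integral_le
  obtain ⟨Cv, hCv⟩ := hv.exists_forall_norm_integral_le
  have hD_bound := (dotProductCLE : (Fin n → ℝ) ≃L[ℝ] _).toContinuousLinearMap.le_opNorm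
  filter_upwards [ae_slope_eq_of_sSup_eq volume hΓ c (fun γ ↦ dotProductCLE (m γ))
    (fun γ _ ↦ (le_abs_self _).trans (hCu γ))
    (fun γ _ ↦ (hD_bound _).trans (mul_le_mul_of_nonneg_left (hCv γ) (norm_nonneg _)))] with lam hlam
  subst hF_affine
  have hmoment : ∀ γ ∈ Γ, ∀ γ' ∈ Γ, _ → _ → m γ = m γ' := fun γ hγ γ' hγ' hmax hmax' ↦
    dotProductCLE.injective (hlam γ hγ γ' hγ' hmax hmax')
  refine ⟨hmoment, fun hinj γ hγ γ' hγ' x x' hx hx' hmax hmax' ↦ hinj ?_⟩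
  simpa [m, hx, hx', integral_dirac] using hmoment γ hγ γ' hγ' hmax hmax'
end

section
/- Let X be a compact metric space and Γ a nonempty compact subset of the space of Borel probability measures on X equipped with the topology of weak convergence. For u in the Banach space C(X, ℝ) of continuous real-valued functions on X with the supremum norm, the maximum max_{γ ∈ Γ} ∫_X u dγ is attained. Then the set {u ∈ C(X, ℝ) : the set of γ ∈ Γ attaining max_{γ' ∈ Γ} ∫_X u dγ' is not a singleton} is meagre in C(X, ℝ). -/
/-!
The value function `f u = max_{γ ∈ Γ} ∫ u dγ` is 1-Lipschitz, and every maximizer `γ` at `u`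
is a subgradient of `f` at `u`. Along any line `t ↦ u + t • g` the function `f` is Lipschitz,
hence differentiable at almost every `t`, and there all maximizers give the same value to
`∫ g dγ`. So the closed set of `u` having two maximizers whose `g`-integrals differ by at least
`c > 0` has empty interior. Since continuous functions separate probability measures, a
non-unique maximizer at `u` puts `u` in one of these sets for `g` in a countable dense subset of
`C(X, ℝ)` and `c = 1 / (n + 1)`.
-/

open MeasureTheory Set

noncomputable section

namespace MaxIntegral

variable {X : Type*} [MetricSpace X] [MeasurableSpace X]

def pairing (u : C(X, ℝ)) (γ : ProbabilityMeasure X) : ℝ := ∫ x, u x ∂(γ : Measure X)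

def maxPairing (Γ : Set (ProbabilityMeasure X)) (u : C(X, ℝ)) : ℝ :=
  sSup ((fun γ => pairing u γ) '' Γ)

def maximizers (Γ : Set (ProbabilityMeasure X)) (u : C(X, ℝ)) : Set (ProbabilityMeasure X) :=
  {γ ∈ Γ | pairing u γ = maxPairing Γ u}

def gapSet (Γ : Set (ProbabilityMeasure X)) (g : C(X, ℝ)) (c : ℝ) : Set C(X, ℝ) :=
  {u | ∃ γ₁ ∈ maximizers Γ u, ∃ γ₂ ∈ maximizers Γ u, c ≤ pairing g γ₁ - pairing g γ₂}

theorem exists_pairing_ne [BorelSpace X] {γ₁ γ₂ : ProbabilityMeasure X} (h : γ₁ ≠ γ₂) :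
    ∃ u : C(X, ℝ), pairing u γ₁ ≠ pairing u γ₂ := by
  by_contra! hall
  exact h <| ProbabilityMeasure.toMeasure_injective <|
    ext_of_forall_integral_eq_of_IsFiniteMeasure fun f => hall f.toContinuousMap

variable [CompactSpace X]

theorem abs_pairing_le (u : C(X, ℝ)) (γ : ProbabilityMeasure X) :
    |pairing u γ| ≤ ‖u‖ := by
  simpa [pairing] using norm_integral_le_of_norm_le_const (μ := (γ : Measure X))
    (Filter.Eventually.of_forall u.norm_coe_le_norm)

variable {Γ : Set (ProbabilityMeasure X)}

theorem pairing_le_maxPairing {γ : ProbabilityMeasure X} (hγ : γ ∈ Γ) (u : C(X, ℝ)) :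
    pairing u γ ≤ maxPairing Γ u :=
  le_csSup ⟨‖u‖, by rintro _ ⟨γ, -, rfl⟩; exact le_of_abs_le (abs_pairing_le u γ)⟩
    (mem_image_of_mem _ hγ)

variable [BorelSpace X]

theorem integrable_continuousMap (u : C(X, ℝ)) (γ : ProbabilityMeasure X) :
    Integrable u (γ : Measure X) :=
  (BoundedContinuousFunction.mkOfCompact u).integrable _

theorem pairing_add_smul (u g : C(X, ℝ)) (t : ℝ) (γ : ProbabilityMeasure X) :
    pairing (u + t • g) γ = pairing u γ + t * pairing g γ := by
  simp only [pairing, ContinuousMap.add_apply, ContinuousMap.smul_apply, smul_eq_mul]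
  rw [integral_add (integrable_continuousMap u γ) ((integrable_continuousMap g γ).const_mul t),
    integral_const_mul]

theorem lipschitzWith_pairing_left (γ : ProbabilityMeasure X) :
    LipschitzWith 1 (fun u : C(X, ℝ) => pairing u γ) := by
  refine LipschitzWith.of_dist_le_mul fun u v => ?_
  have h := pairing_add_smul v (u - v) 1 γ
  rw [one_smul, add_sub_cancel, one_mul] at h
  rw [NNReal.coe_one, one_mul, Real.dist_eq, dist_eq_norm, h, add_sub_cancel_left]
  exact abs_pairing_le _ _

@[fun_prop]
theorem continuous_pairing_right (u : C(X, ℝ)) : Continuous (pairing (X := X) u) :=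
  ProbabilityMeasure.continuous_integral_continuousMap u

theorem continuous_pairing :
    Continuous fun p : C(X, ℝ) × ProbabilityMeasure X => pairing p.1 p.2 :=
  continuous_prod_of_continuous_lipschitzWith _ 1 continuous_pairing_right
    lipschitzWith_pairing_left

theorem lipschitzWith_maxPairing (hne : Γ.Nonempty) : LipschitzWith 1 (maxPairing Γ) := by
  refine LipschitzWith.of_le_add fun u v => csSup_le (hne.image _) ?_
  rintro _ ⟨γ, hγ, rfl⟩
  calc pairing u γ ≤ pairing v γ + dist u v := by
        simpa using (lipschitzWith_pairing_left γ).le_add_mul u v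
    _ ≤ maxPairing Γ v + dist u v := by gcongr; exact pairing_le_maxPairing hγ v

theorem maximizers_nonempty (hne : Γ.Nonempty) (hcomp : IsCompact Γ) (u : C(X, ℝ)) :
    (maximizers Γ u).Nonempty := by
  obtain ⟨γ, hγ, h⟩ := hcomp.exists_sSup_image_eq hne (continuous_pairing_right u).continuousOn
  exact ⟨γ, hγ, h.symm⟩

theorem pairing_eq_of_hasDerivAt {u g : C(X, ℝ)} {t d : ℝ} {γ : ProbabilityMeasure X}
    (hγ : γ ∈ maximizers Γ (u + t • g))
    (hd : HasDerivAt (fun s => maxPairing Γ (u + s • g)) d t) : pairing g γ = d := by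
  have hmin : IsLocalMin (fun s => maxPairing Γ (u + s • g) - s * pairing g γ) t := by
    refine Filter.Eventually.of_forall fun s => ?_
    have hs := pairing_le_maxPairing hγ.1 (u + s • g)
    have ht := hγ.2
    rw [pairing_add_smul] at hs ht
    simp only
    linarith
  have := hmin.hasDerivAt_eq_zero (hd.sub (hasDerivAt_mul_const (pairing g γ)))
  linarith

theorem isClosed_gapSet (hne : Γ.Nonempty) (hcomp : IsCompact Γ) (g : C(X, ℝ)) (c : ℝ) :
    IsClosed (gapSet Γ g c) := by
  have : CompactSpace Γ := isCompact_iff_compactSpace.mp hcomp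
  have hgraph :
      IsClosed {p : C(X, ℝ) × ProbabilityMeasure X | pairing p.1 p.2 = maxPairing Γ p.1} :=
    isClosed_eq continuous_pairing ((lipschitzWith_maxPairing hne).continuous.comp continuous_fst)
  let S : Set (C(X, ℝ) × (Γ × Γ)) := {p | pairing p.1 p.2.1 = maxPairing Γ p.1 ∧
    pairing p.1 p.2.2 = maxPairing Γ p.1 ∧ c ≤ pairing g p.2.1 - pairing g p.2.2}
  have hS : IsClosed S :=
    (hgraph.preimage (f := fun p : C(X, ℝ) × (Γ × Γ) => (p.1, p.2.1.1)) (by fun_prop)).inter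
      ((hgraph.preimage (f := fun p : C(X, ℝ) × (Γ × Γ) => (p.1, p.2.2.1)) (by fun_prop)).inter
        (isClosed_le (g := fun p : C(X, ℝ) × (Γ × Γ) => pairing g p.2.1 - pairing g p.2.2)
          continuous_const (by fun_prop)))
  convert isClosedMap_fst_of_compactSpace S hS using 1
  ext u
  constructor
  · rintro ⟨γ₁, h₁, γ₂, h₂, hgap⟩
    exact ⟨(u, ⟨γ₁, h₁.1⟩, ⟨γ₂, h₂.1⟩), ⟨h₁.2, h₂.2, hgap⟩, rfl⟩
  · rintro ⟨⟨u, γ₁, γ₂⟩, ⟨h₁, h₂, hgap⟩, rfl⟩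
    exact ⟨γ₁, ⟨γ₁.2, h₁⟩, γ₂, ⟨γ₂.2, h₂⟩, hgap⟩

theorem interior_gapSet_eq_empty (hne : Γ.Nonempty) (g : C(X, ℝ)) {c : ℝ} (hc : 0 < c) :
    interior (gapSet Γ g c) = ∅ := by
  refine eq_empty_iff_forall_notMem.mpr fun u hu => ?_
  let line : ℝ → C(X, ℝ) := fun t => u + t • g
  have hline : LipschitzWith ‖g‖₊ line := LipschitzWith.of_dist_le_mul fun s t => by
    simp [line, dist_eq_norm, ← sub_smul, norm_smul, mul_comm]
  have hdense : Dense {t | DifferentiableAt ℝ (maxPairing Γ ∘ line) t} :=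
    Measure.dense_of_ae (((lipschitzWith_maxPairing hne).comp hline).ae_differentiableAt_real)
  obtain ⟨t, htdiff, htE⟩ := hdense.exists_mem_open
    (isOpen_interior.preimage hline.continuous) ⟨0, by simpa [line] using hu⟩
  obtain ⟨γ₁, h₁, γ₂, h₂, hgap⟩ := interior_subset htE
  rw [pairing_eq_of_hasDerivAt h₁ htdiff.hasDerivAt,
    pairing_eq_of_hasDerivAt h₂ htdiff.hasDerivAt] at hgap
  linarith

theorem exists_mem_gapSet {D : Set C(X, ℝ)} (hD : Dense D) {u : C(X, ℝ)}
    {γ₁ γ₂ : ProbabilityMeasure X} (h₁ : γ₁ ∈ maximizers Γ u) (h₂ : γ₂ ∈ maximizers Γ u)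
    (h : γ₁ ≠ γ₂) : ∃ g ∈ D, ∃ n : ℕ, u ∈ gapSet Γ g (1 / (n + 1)) := by
  obtain ⟨g, hgD, hg⟩ := hD.exists_mem_open
    (isOpen_ne_fun (lipschitzWith_pairing_left γ₁).continuous
      (lipschitzWith_pairing_left γ₂).continuous) (exists_pairing_ne h)
  obtain ⟨n, hn⟩ := exists_nat_one_div_lt (abs_pos.mpr (sub_ne_zero.mpr hg))
  refine ⟨g, hgD, n, ?_⟩
  rcases le_total (pairing g γ₂) (pairing g γ₁) with hle | hle
  · exact ⟨γ₁, h₁, γ₂, h₂, by rw [abs_of_nonneg (sub_nonneg.mpr hle)] at hn; exact hn.le⟩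
  · exact ⟨γ₂, h₂, γ₁, h₁, by rw [abs_of_nonpos (sub_nonpos.mpr hle)] at hn; linarith⟩

end MaxIntegral

end

open MaxIntegral in
/-- Theorem 1, infinite-dimensional part — for a nonempty compact
set `Γ` of Borel probability measures on a compact metric space `X` (weak
topology), the set of continuous utilities `u ∈ C(X, ℝ)` at which the
maximizer of `γ ↦ ∫ u dγ` over `Γ` is not unique is meagre in `C(X, ℝ)`. -/
theorem stmt10 {X : Type*} [MetricSpace X] [CompactSpace X]
    [MeasurableSpace X] [BorelSpace X]
    (Γ : Set (ProbabilityMeasure X)) (hne : Γ.Nonempty) (hcomp : IsCompact Γ) :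
    IsMeagre {u : C(X, ℝ) |
      ¬ ∃ γ₀ : ProbabilityMeasure X,
        {γ ∈ Γ | ∫ x, u x ∂(γ : Measure X)
          = sSup ((fun γ' : ProbabilityMeasure X =>
              ∫ x, u x ∂(γ' : Measure X)) '' Γ)} = {γ₀}} := by
  obtain ⟨D, hDc, hDd⟩ := TopologicalSpace.exists_countable_dense C(X, ℝ)
  have hnowhere (g : C(X, ℝ)) (n : ℕ) : IsNowhereDense (gapSet Γ g (1 / (n + 1))) :=
    (isClosed_gapSet hne hcomp g _).isNowhereDense_iff.mpr
      (interior_gapSet_eq_empty hne g (by positivity))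
  refine (isMeagre_biUnion hDc fun g _ => isMeagre_iUnion fun n => (hnowhere g n).isMeagre).mono ?_
  intro u (hu : ¬ ∃ γ₀, maximizers Γ u = {γ₀})
  obtain ⟨γ₁, h₁, γ₂, h₂, h⟩ :=
    ((maximizers_nonempty hne hcomp u).exists_eq_singleton_or_nontrivial.resolve_left hu)
  obtain ⟨g, hgD, n, hn⟩ := exists_mem_gapSet hDd h₁ h₂ h
  exact mem_biUnion hgD (mem_iUnion.mpr ⟨n, hn⟩)
end
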